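/- (Recursion for the dual partition function, eq. (1)) Fix a finite alphabet A with |A| = 4 and a weight function w assigning a positive real w(L,σ_L) to each loop L of a bistructure B and each assignment σ_L : L → A. For a substructure X and τ : E^X → A define Q(X,τ) = Σ_{σ : V^X → A, σ|_{E^X} = τ} Π_{P∈X} w(P, σ|_P). Let X be an irreducible substructure of B, L ∈ X, and X_1,…,X_k the irreducible components of X∖{L}, and let W = (L ∪ ⋃_{i=1}^k E^{X_i}) ∖ E^X. Then for every τ : E^X → A, Q(X,τ) = Σ_{σ' : W → A} w(L, σ_L) · Π_{i=1}^k Q(X_i, τ_{X_i}), where σ_L : L → A and τ_{X_i} : E^{X_i} → A denote the restrictions of the combined assignment given by τ on E^X and σ' on W. -/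

import Mathlib

/-!
The interior vertices `V^X ∖ E^X` of `X` split disjointly into `W` and the interior vertices of
the components `Xᵢ`: a vertex of `L`, or an exposed vertex of some `Xᵢ`, that is not exposed in
`X` lies in `W`, and distinct components have disjoint vertex sets. Summing first over the
letters on `W` and then over the rest, the weight of `L` sees only letters on `W ∪ E^X`, and the
inner sum factorises over the components, since the weights of `Xᵢ` see only the vertices of
`Xᵢ`, whose non-interior ones are exposed in `Xᵢ` and hence lie in `W ∪ E^X`.
-/

/-- An arc `(i,j)` in a diagram. -/
abbrev Arc : Type := ℕ × ℕ

/-- Two arcs cross iff `p.1 < q.1 < p.2 < q.2` or `q.1 < p.1 < q.2 < p.2`. -/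
def Arc.crosses (p q : Arc) : Prop :=
  (p.1 < q.1 ∧ q.1 < p.2 ∧ p.2 < q.2) ∨ (q.1 < p.1 ∧ p.1 < q.2 ∧ q.2 < p.2)

/-- Nesting order: `Arc.nested q p` means `q ≺ p`, i.e. `p.1 < q.1 < q.2 < p.2`. -/
def Arc.nested (q p : Arc) : Prop := p.1 < q.1 ∧ q.1 < q.2 ∧ q.2 < p.2

/-- An RNA secondary structure on `{1,…,n}` with rainbow arc `(0, n+1)`. -/
structure SecStr (n : ℕ) : Type where
  arcs : Finset Arc
  lt_of_mem : ∀ p ∈ arcs, p.1 < p.2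
  le_of_mem : ∀ p ∈ arcs, p.2 ≤ n + 1
  rainbow_mem : (0, n + 1) ∈ arcs
  matching : ∀ p ∈ arcs, ∀ q ∈ arcs, ∀ v : ℕ, 1 ≤ v → v ≤ n →
    (v = p.1 ∨ v = p.2) → (v = q.1 ∨ v = q.2) → p = q
  noncrossing : ∀ p ∈ arcs, ∀ q ∈ arcs, ¬ Arc.crosses p q

namespace SecStr

variable {n : ℕ}

/-- The loop of an arc `p` of `R`. -/
def loop (R : SecStr n) (p : Arc) : Set ℕ :=
  {v | p.1 ≤ v ∧ v ≤ p.2 ∧ ¬ ∃ q ∈ R.arcs, Arc.nested q p ∧ q.1 < v ∧ v < q.2}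

/-- A loop of `R` is the loop of one of its arcs. -/
def IsLoop (R : SecStr n) (L : Set ℕ) : Prop := ∃ p ∈ R.arcs, L = R.loop p

end SecStr
/-- A label for a loop of a bistructure: `true` tags `R`-loops, `false` tags `S`-loops,
together with the maximal arc of the loop. -/
abbrev LoopLabel : Type := Bool × Arc

/-- A bistructure `B(R,S)`: two secondary structures on the same vertex set. -/
structure Bistructure (n : ℕ) : Type where
  R : SecStr n
  S : SecStr n

namespace Bistructure

variable {n : ℕ}

/-- The loop set of a bistructure: the disjoint union of the `R`-loops and `S`-loops,
encoded as tagged arcs. -/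
def labels (B : Bistructure n) : Finset LoopLabel :=
  B.R.arcs.image (fun p => (true, p)) ∪ B.S.arcs.image (fun p => (false, p))

/-- The vertex set of the loop with label `x`. -/
def loopSet (B : Bistructure n) (x : LoopLabel) : Set ℕ :=
  if x.1 then B.R.loop x.2 else B.S.loop x.2

/-- Two loops intersect. -/
def intersects (B : Bistructure n) (a b : LoopLabel) : Prop :=
  (B.loopSet a ∩ B.loopSet b).Nonempty

end Bistructure

open scoped Classical

namespace Bistructure

variable {n : ℕ}

/-- The vertex set `V^X` of a substructure `X` (a set of loops of `B`). -/
def Vset (B : Bistructure n) (X : Finset LoopLabel) : Set ℕ :=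
  ⋃ L ∈ X, B.loopSet L

/-- The exposed vertex set `E^X = V^X ∩ V^{B∖X}` of a substructure `X`. -/
def exposed (B : Bistructure n) (X : Finset LoopLabel) : Set ℕ :=
  B.Vset X ∩ B.Vset (B.labels \ X)

/-- A substructure is reducible if it can be partitioned into two nonempty parts such
that every loop of one part is disjoint from every loop of the other. -/
def Reducible (B : Bistructure n) (X : Finset LoopLabel) : Prop :=
  ∃ X1 X2 : Finset LoopLabel, X1 ∪ X2 = X ∧ Disjoint X1 X2 ∧
    X1.Nonempty ∧ X2.Nonempty ∧ ∀ a ∈ X1, ∀ b ∈ X2, ¬ B.intersects a b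

/-- The connected component of `L` in the loop intersection graph of `X`. -/
noncomputable def comp (B : Bistructure n) (X : Finset LoopLabel) (L : LoopLabel) :
    Finset LoopLabel :=
  X.filter (fun P =>
    Relation.ReflTransGen (fun a b => a ∈ X ∧ b ∈ X ∧ B.intersects a b) L P)

/-- The irreducible components of a substructure `X`: the connected components of its
loop intersection graph. -/
noncomputable def comps (B : Bistructure n) (X : Finset LoopLabel) :
    Finset (Finset LoopLabel) :=
  X.image (B.comp X)

end Bistructure

namespace Bistructure

variable {n : ℕ} {A : Type} [Fintype A]

/-- The dual partition function `Q(X,τ)` of a substructure `X` with boundary assignment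
`τ` on the exposed vertices: the sum over all assignments `σ` of letters of `A` to the
vertices of `X` agreeing with `τ` on `E^X` (extended by the default letter `d` off
`V^X`) of the product of the loop weights. -/
noncomputable def Qpf (B : Bistructure n) (w : LoopLabel → (Fin (n + 2) → A) → ℝ)
    (d : A) (X : Finset LoopLabel) (τ : Fin (n + 2) → A) : ℝ :=
  ∑ σ ∈ Finset.univ.filter (fun σ : Fin (n + 2) → A =>
      (∀ v : Fin (n + 2), (v : ℕ) ∈ B.exposed X → σ v = τ v) ∧
      (∀ v : Fin (n + 2), (v : ℕ) ∉ B.Vset X → σ v = d)),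
    ∏ P ∈ X, w P σ

/-- The set `W = (L ∪ ⋃ᵢ E^{Xᵢ}) ∖ E^X` of vertices newly assigned at the removal of
the loop `L` from the substructure `X`. -/
noncomputable def Wset (B : Bistructure n) (X : Finset LoopLabel) (L : LoopLabel) :
    Set ℕ :=
  (B.loopSet L ∪ ⋃ C ∈ B.comps (X.erase L), B.exposed C) \ B.exposed X

/-- The combined assignment: `σ'` on `W` and `τ` elsewhere. -/
noncomputable def combine (W : Set ℕ) (σ' τ : Fin (n + 2) → A) : Fin (n + 2) → A :=
  fun v => if (v : ℕ) ∈ W then σ' v else τ v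

end Bistructure

section Assignments

variable {ι A R : Type*} [Fintype ι] [DecidableEq ι] [Fintype A]

noncomputable def assignments (F : Set ι) (β : ι → A) : Finset (ι → A) :=
  {σ | ∀ i ∉ F, σ i = β i}

@[simp]
lemma mem_assignments {F : Set ι} {β σ : ι → A} :
    σ ∈ assignments F β ↔ ∀ i ∉ F, σ i = β i := by
  simp [assignments]

lemma sum_assignments_congr [AddCommMonoid R] {F S : Set ι} {f : (ι → A) → R}
    (hf : DependsOn f S) {β β' : ι → A} (h : ∀ i ∈ S \ F, β i = β' i) :
    ∑ σ ∈ assignments F β, f σ = ∑ σ ∈ assignments F β', f σ := by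
  refine Finset.sum_nbij' (fun σ => F.piecewise σ β') (fun σ => F.piecewise σ β)
    (fun _ _ => mem_assignments.mpr fun _ hi => Set.piecewise_eq_of_notMem _ _ _ hi)
    (fun _ _ => mem_assignments.mpr fun _ hi => Set.piecewise_eq_of_notMem _ _ _ hi)
    (fun σ hσ => ?_) (fun σ hσ => ?_) (fun σ hσ => ?_) <;>
    simp only [mem_assignments] at hσ
  · ext i
    by_cases hi : i ∈ F <;> simp [hi, hσ]
  · ext i
    by_cases hi : i ∈ F <;> simp [hi, hσ]
  · refine hf fun i hi => ?_
    by_cases hiF : i ∈ F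
    · simp [hiF]
    · simp [hiF, hσ i hiF, h i ⟨hi, hiF⟩]

lemma sum_assignments_union [AddCommMonoid R] {F G : Set ι} (hFG : Disjoint F G) (β : ι → A)
    (f : (ι → A) → R) :
    ∑ σ ∈ assignments (F ∪ G) β, f σ =
      ∑ σ ∈ assignments F β, ∑ σ' ∈ assignments G σ, f σ' := by
  rw [← Finset.sum_biUnion]
  · congr 1
    ext σ'
    simp only [mem_assignments, Finset.mem_biUnion]
    constructor
    · intro h
      refine ⟨G.piecewise β σ', fun i hi => ?_, fun i hi => ?_⟩
      · by_cases hiG : i ∈ G <;> simp [hiG, h i, hi]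
      · simp [hi]
    · rintro ⟨σ, hσ, hσ'⟩ i hi
      rw [Set.mem_union, not_or] at hi
      rw [hσ' i hi.2, hσ i hi.1]
  · intro σ₁ hσ₁ σ₂ hσ₂ hne
    refine Finset.disjoint_left.mpr fun σ' h₁ h₂ => hne (funext fun i => ?_)
    simp only [Finset.mem_coe, mem_assignments] at hσ₁ hσ₂ h₁ h₂
    by_cases hiG : i ∈ G
    · rw [hσ₁ i (Set.disjoint_right.mp hFG hiG), hσ₂ i (Set.disjoint_right.mp hFG hiG)]
    · rw [← h₁ i hiG, h₂ i hiG]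

lemma sum_assignments_biUnion_prod [CommSemiring R] {κ : Type*} [DecidableEq κ]
    (s : Finset κ) (F : κ → Set ι) (hF : (s : Set κ).PairwiseDisjoint F)
    (f : κ → (ι → A) → R)
    (hf : ∀ k ∈ s, DependsOn (f k) (F k ∪ (⋃ j ∈ s, F j)ᶜ))
    (β : ι → A) :
    ∑ σ ∈ assignments (⋃ k ∈ s, F k) β, ∏ k ∈ s, f k σ =
      ∏ k ∈ s, ∑ σ ∈ assignments (F k) β, f k σ := by
  induction s using Finset.induction_on generalizing β with
  | empty =>
    have : assignments (∅ : Set ι) β = {β} := by ext σ; simp [funext_iff]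
    simp [this]
  | insert a t ha ih =>
    rw [Finset.coe_insert, Set.pairwiseDisjoint_insert_of_notMem (by simpa using ha)] at hF
    have hdisj : Disjoint (F a) (⋃ k ∈ t, F k) :=
      Set.disjoint_iUnion₂_right.mpr fun k hk => hF.2 k hk
    have hU : ⋃ k ∈ insert a t, F k = F a ∪ ⋃ k ∈ t, F k :=
      Finset.set_biUnion_insert _ _ _
    rw [hU] at hf
    rw [hU, sum_assignments_union hdisj]
    simp only [Finset.prod_insert ha, Finset.sum_mul]
    refine Finset.sum_congr rfl fun σ hσ => ?_
    rw [mem_assignments] at hσ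
    have hfa : ∀ σ' ∈ assignments (⋃ k ∈ t, F k) σ, f a σ' = f a σ := by
      intro σ' hσ'
      refine hf a (Finset.mem_insert_self a t) fun i hi => (mem_assignments.mp hσ') i ?_
      rcases hi with hi | hi
      · exact Set.disjoint_left.mp hdisj hi
      · exact fun h => hi (Or.inr h)
    calc ∑ σ' ∈ assignments (⋃ k ∈ t, F k) σ, f a σ' * ∏ k ∈ t, f k σ'
        = f a σ * ∑ σ' ∈ assignments (⋃ k ∈ t, F k) σ, ∏ k ∈ t, f k σ' := by
          rw [Finset.mul_sum]
          exact Finset.sum_congr rfl fun σ' hσ' => by rw [hfa σ' hσ']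
      _ = f a σ * ∏ k ∈ t, ∑ σ' ∈ assignments (F k) σ, f k σ' := by
          rw [ih hF.1 fun k hk => (hf k (Finset.mem_insert_of_mem hk)).mono
            (Set.union_subset_union_right _ (Set.compl_subset_compl.mpr Set.subset_union_right))]
      _ = f a σ * ∏ k ∈ t, ∑ σ' ∈ assignments (F k) β, f k σ' := by
          refine congrArg _ (Finset.prod_congr rfl fun k hk => ?_)
          refine sum_assignments_congr (hf k (Finset.mem_insert_of_mem hk)) fun i hi => ?_
          exact hσ i fun h => hi.1.resolve_left hi.2 (Or.inl h)

end Assignments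

namespace Bistructure

variable {n : ℕ} {B : Bistructure n}

lemma intersects_comm {a b : LoopLabel} : B.intersects a b ↔ B.intersects b a := by
  simp only [intersects, Set.inter_comm]

lemma comp_eq_of_mem {X : Finset LoopLabel} {P Q : LoopLabel} (h : Q ∈ B.comp X P) :
    B.comp X Q = B.comp X P := by
  have : Std.Symm (fun a b : LoopLabel => a ∈ X ∧ b ∈ X ∧ B.intersects a b) :=
    ⟨fun _ _ ⟨ha, hb, hab⟩ => ⟨hb, ha, intersects_comm.mp hab⟩⟩
  have hPQ := (Finset.mem_filter.mp h).2
  ext R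
  simp only [comp, Finset.mem_filter, and_congr_right_iff]
  exact fun _ => ⟨hPQ.trans, (Std.Symm.symm _ _ hPQ).trans⟩

lemma mem_comp_self {X : Finset LoopLabel} {P : LoopLabel} (hP : P ∈ X) : P ∈ B.comp X P :=
  Finset.mem_filter.mpr ⟨hP, .refl⟩

lemma subset_of_mem_comps {X C : Finset LoopLabel} (hC : C ∈ B.comps X) : C ⊆ X := by
  obtain ⟨P, -, rfl⟩ := Finset.mem_image.mp hC
  exact Finset.filter_subset _ _

lemma eq_comp_of_mem_comps {X C : Finset LoopLabel} (hC : C ∈ B.comps X) {P : LoopLabel}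
    (hP : P ∈ C) : C = B.comp X P := by
  obtain ⟨Q, -, rfl⟩ := Finset.mem_image.mp hC
  exact (comp_eq_of_mem hP).symm

lemma pairwiseDisjoint_comps (X : Finset LoopLabel) :
    (B.comps X : Set (Finset LoopLabel)).PairwiseDisjoint id :=
  fun _ hC _ hC' hne => Finset.disjoint_left.mpr fun _ hP hP' =>
    hne ((eq_comp_of_mem_comps hC hP).trans (eq_comp_of_mem_comps hC' hP').symm)

lemma biUnion_comps (X : Finset LoopLabel) : (B.comps X).biUnion id = X := by
  ext P
  simp only [Finset.mem_biUnion, id]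
  exact ⟨fun ⟨_, hC, hP⟩ => subset_of_mem_comps hC hP,
    fun hP => ⟨B.comp X P, Finset.mem_image_of_mem _ hP, mem_comp_self hP⟩⟩

lemma prod_comps {M : Type*} [CommMonoid M] (X : Finset LoopLabel) (f : LoopLabel → M) :
    ∏ P ∈ X, f P = ∏ C ∈ B.comps X, ∏ P ∈ C, f P := by
  conv_lhs => rw [← biUnion_comps (B := B) X]
  exact Finset.prod_biUnion (pairwiseDisjoint_comps X)

lemma mem_Vset {X : Finset LoopLabel} {v : ℕ} :
    v ∈ B.Vset X ↔ ∃ P ∈ X, v ∈ B.loopSet P := by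
  simp [Vset]

lemma Vset_mono {X Y : Finset LoopLabel} (h : X ⊆ Y) : B.Vset X ⊆ B.Vset Y :=
  Set.biUnion_subset_biUnion_left h

lemma loopSet_subset_Vset {X : Finset LoopLabel} {P : LoopLabel} (hP : P ∈ X) :
    B.loopSet P ⊆ B.Vset X :=
  Set.subset_biUnion_of_mem (u := B.loopSet) hP

lemma disjoint_Vset_of_mem_comps {X C C' : Finset LoopLabel} (hC : C ∈ B.comps X)
    (hC' : C' ∈ B.comps X) (hne : C ≠ C') : Disjoint (B.Vset C) (B.Vset C') := by
  refine Set.disjoint_left.mpr fun v hv hv' => hne ?_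
  obtain ⟨P, hP, hvP⟩ := mem_Vset.mp hv
  obtain ⟨Q, hQ, hvQ⟩ := mem_Vset.mp hv'
  have hPQ : Q ∈ B.comp X P :=
    Finset.mem_filter.mpr ⟨subset_of_mem_comps hC' hQ,
      .single ⟨subset_of_mem_comps hC hP, subset_of_mem_comps hC' hQ, v, hvP, hvQ⟩⟩
  rw [eq_comp_of_mem_comps hC hP, eq_comp_of_mem_comps hC' hQ, comp_eq_of_mem hPQ]

def interiorVset (B : Bistructure n) (X : Finset LoopLabel) : Set ℕ :=
  B.Vset X \ B.exposed X

lemma pairwiseDisjoint_interiorVset (Y : Finset LoopLabel) :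
    (B.comps Y : Set (Finset LoopLabel)).PairwiseDisjoint B.interiorVset :=
  fun _ hC _ hC' hne =>
    (disjoint_Vset_of_mem_comps hC hC' hne).mono Set.sdiff_subset Set.sdiff_subset

lemma Vset_subset_interiorVset_union_compl {Y C : Finset LoopLabel} (hC : C ∈ B.comps Y) :
    B.Vset C ⊆ B.interiorVset C ∪ (⋃ C' ∈ B.comps Y, B.interiorVset C')ᶜ := by
  intro v hv
  by_cases hvE : v ∈ B.exposed C
  · refine Or.inr fun hv' => ?_
    obtain ⟨C', hC', hvC'⟩ := Set.mem_iUnion₂.mp hv'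
    by_cases hCC' : C = C'
    · exact hvC'.2 (hCC' ▸ hvE)
    · exact Set.disjoint_left.mp (disjoint_Vset_of_mem_comps hC hC' hCC') hv hvC'.1
  · exact Or.inl ⟨hv, hvE⟩

section Removal

variable {X C : Finset LoopLabel} {L : LoopLabel}

lemma loopSet_subset_Wset_union_exposed : B.loopSet L ⊆ B.Wset X L ∪ B.exposed X := by
  intro v hv
  by_cases hE : v ∈ B.exposed X
  · exact Or.inr hE
  · exact Or.inl ⟨Or.inl hv, hE⟩

lemma exposed_subset_Wset_union_exposed (hC : C ∈ B.comps (X.erase L)) :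
    B.exposed C ⊆ B.Wset X L ∪ B.exposed X := by
  intro v hv
  by_cases hE : v ∈ B.exposed X
  · exact Or.inr hE
  · exact Or.inl ⟨Or.inr (Set.mem_biUnion hC hv), hE⟩

lemma Vset_inter_subset_exposed (hL : L ∈ B.labels) (hC : C ∈ B.comps (X.erase L)) :
    B.Vset C ∩ (B.Wset X L ∪ B.exposed X) ⊆ B.exposed C := by
  have hCX : C ⊆ X.erase L := subset_of_mem_comps hC
  rintro v ⟨hvC, ⟨hv | hv, -⟩ | hv⟩
  · have hLC : L ∈ B.labels \ C :=
      Finset.mem_sdiff.mpr ⟨hL, fun h => Finset.notMem_erase L X (hCX h)⟩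
    exact ⟨hvC, loopSet_subset_Vset hLC hv⟩
  · obtain ⟨C', hC', hvC'⟩ := Set.mem_iUnion₂.mp hv
    by_cases hCC' : C = C'
    · exact hCC' ▸ hvC'
    · exact (Set.disjoint_left.mp (disjoint_Vset_of_mem_comps hC hC' hCC') hvC hvC'.1).elim
  · exact ⟨hvC, Vset_mono (Finset.sdiff_subset_sdiff subset_rfl
      (hCX.trans (Finset.erase_subset L X))) hv.2⟩

lemma disjoint_interiorVset_Wset_union_exposed (hL : L ∈ B.labels)
    (hC : C ∈ B.comps (X.erase L)) :
    Disjoint (B.interiorVset C) (B.Wset X L ∪ B.exposed X) :=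
  Set.disjoint_left.mpr fun _ hv hv' => hv.2 (Vset_inter_subset_exposed hL hC ⟨hv.1, hv'⟩)

lemma disjoint_Wset_iUnion_interiorVset (hL : L ∈ B.labels) :
    Disjoint (B.Wset X L) (⋃ C ∈ B.comps (X.erase L), B.interiorVset C) :=
  Set.disjoint_iUnion₂_right.mpr fun _ hC =>
    (disjoint_interiorVset_Wset_union_exposed hL hC).symm.mono_left Set.subset_union_left

lemma interiorVset_eq_Wset_union (hLX : L ∈ X) (hL : L ∈ B.labels) :
    B.interiorVset X = B.Wset X L ∪ ⋃ C ∈ B.comps (X.erase L), B.interiorVset C := by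
  ext v
  constructor
  · rintro ⟨hvX, hvE⟩
    obtain ⟨P, hP, hvP⟩ := mem_Vset.mp hvX
    by_cases hPL : P = L
    · exact Or.inl ⟨Or.inl (hPL ▸ hvP), hvE⟩
    have hP' : P ∈ X.erase L := Finset.mem_erase.mpr ⟨hPL, hP⟩
    have hC : B.comp (X.erase L) P ∈ B.comps (X.erase L) := Finset.mem_image_of_mem _ hP'
    by_cases hvEC : v ∈ B.exposed (B.comp (X.erase L) P)
    · exact Or.inl ⟨Or.inr (Set.mem_biUnion hC hvEC), hvE⟩
    · exact Or.inr (Set.mem_biUnion hC ⟨loopSet_subset_Vset (mem_comp_self hP') hvP, hvEC⟩)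
  · have hVC : ∀ C ∈ B.comps (X.erase L), B.Vset C ⊆ B.Vset X := fun C hC =>
      Vset_mono ((subset_of_mem_comps hC).trans (Finset.erase_subset L X))
    rintro (⟨hv | hv, hvE⟩ | hv)
    · exact ⟨loopSet_subset_Vset hLX hv, hvE⟩
    · obtain ⟨C, hC, hvC⟩ := Set.mem_iUnion₂.mp hv
      exact ⟨hVC C hC hvC.1, hvE⟩
    · obtain ⟨C, hC, hvC⟩ := Set.mem_iUnion₂.mp hv
      exact ⟨hVC C hC hvC.1, fun hE => Set.disjoint_left.mp
        (disjoint_interiorVset_Wset_union_exposed hL hC) hvC (Or.inr hE)⟩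

lemma disjoint_loopSet_iUnion_interiorVset (hL : L ∈ B.labels) :
    Disjoint (B.loopSet L) (⋃ C ∈ B.comps (X.erase L), B.interiorVset C) :=
  Set.disjoint_iUnion₂_right.mpr fun _ hC =>
    ((disjoint_interiorVset_Wset_union_exposed hL hC).mono_right
      loopSet_subset_Wset_union_exposed).symm

end Removal

variable {A : Type}

noncomputable def extendExposed (B : Bistructure n) (d : A) (X : Finset LoopLabel)
    (τ : Fin (n + 2) → A) : Fin (n + 2) → A :=
  fun v => if (v : ℕ) ∈ B.exposed X then τ v else d

lemma Qpf_eq_sum_assignments [Fintype A] (w : LoopLabel → (Fin (n + 2) → A) → ℝ) (d : A)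
    (X : Finset LoopLabel) (τ : Fin (n + 2) → A) :
    B.Qpf w d X τ =
      ∑ σ ∈ assignments (Fin.val ⁻¹' B.interiorVset X) (B.extendExposed d X τ),
        ∏ P ∈ X, w P σ := by
  refine Finset.sum_congr (Finset.ext fun σ => ?_) fun _ _ => rfl
  simp only [Finset.mem_filter, Finset.mem_univ, true_and, mem_assignments, Set.mem_preimage,
    interiorVset, Set.mem_sdiff, not_and_or, not_not, extendExposed]
  refine ⟨fun ⟨hE, hV⟩ v hv => ?_, fun h => ⟨fun v hv => ?_, fun v hv => ?_⟩⟩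
  · rcases hv with hv | hv
    · rw [if_neg fun h => hv h.1, hV v hv]
    · rw [if_pos hv, hE v hv]
  · simpa [hv] using h v (Or.inr hv)
  · have hvE : (v : ℕ) ∉ B.exposed X := fun h => hv h.1
    simpa [hvE] using h v (Or.inl hv)

lemma dependsOn_combine (W : Set ℕ) (τ : Fin (n + 2) → A) :
    DependsOn (fun σ => combine W σ τ) (Fin.val ⁻¹' W) :=
  fun _ _ h => funext fun v => by by_cases hv : (v : ℕ) ∈ W <;> simp [combine, hv, h v]

lemma sum_filter_combine_eq_sum_assignments [Fintype A] {R : Type*} [AddCommMonoid R]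
    (W : Set ℕ) (d : A) (β τ : Fin (n + 2) → A) (g : (Fin (n + 2) → A) → R) :
    ∑ σ' ∈ Finset.univ.filter (fun σ' : Fin (n + 2) → A =>
        ∀ v : Fin (n + 2), (v : ℕ) ∉ W → σ' v = d), g (combine W σ' τ) =
      ∑ σ ∈ assignments (Fin.val ⁻¹' W) β, g (combine W σ τ) := by
  have hfilter : Finset.univ.filter (fun σ' : Fin (n + 2) → A =>
      ∀ v : Fin (n + 2), (v : ℕ) ∉ W → σ' v = d) =
        assignments (Fin.val ⁻¹' W) fun _ => d := by
    ext σ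
    simp [assignments]
  rw [hfilter]
  exact sum_assignments_congr (fun σ σ' h => congrArg g (dependsOn_combine W τ h)) (by simp)

lemma combine_eq_of_mem_assignments [Fintype A] {d : A} {X : Finset LoopLabel} {W : Set ℕ}
    {σ τ : Fin (n + 2) → A}
    (hσ : σ ∈ assignments (Fin.val ⁻¹' W) (B.extendExposed d X τ))
    {v : Fin (n + 2)} (hv : (v : ℕ) ∈ W ∪ B.exposed X) : combine W σ τ v = σ v := by
  by_cases hvW : (v : ℕ) ∈ W
  · simp [combine, hvW]
  · rw [mem_assignments.mp hσ v hvW]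
    simp [combine, extendExposed, hvW, hv.resolve_left hvW]

lemma Qpf_congr [Fintype A] {w : LoopLabel → (Fin (n + 2) → A) → ℝ} {d : A}
    {X : Finset LoopLabel} {τ τ' : Fin (n + 2) → A}
    (h : ∀ v : Fin (n + 2), (v : ℕ) ∈ B.exposed X → τ v = τ' v) :
    B.Qpf w d X τ = B.Qpf w d X τ' := by
  have : B.extendExposed d X τ = B.extendExposed d X τ' := by
    ext v
    by_cases hv : (v : ℕ) ∈ B.exposed X <;> simp [extendExposed, hv, h]
  rw [Qpf_eq_sum_assignments, Qpf_eq_sum_assignments, this]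

lemma dependsOn_prod_weight {w : LoopLabel → (Fin (n + 2) → A) → ℝ}
    (hw : ∀ P, DependsOn (w P) (Fin.val ⁻¹' B.loopSet P)) (X : Finset LoopLabel) :
    DependsOn (fun σ => ∏ P ∈ X, w P σ) (Fin.val ⁻¹' B.Vset X) :=
  fun _ _ h => Finset.prod_congr rfl fun _ hP => hw _ fun v hv => h v (loopSet_subset_Vset hP hv)

lemma prod_Qpf_comps [Fintype A] {w : LoopLabel → (Fin (n + 2) → A) → ℝ}
    (hw : ∀ P, DependsOn (w P) (Fin.val ⁻¹' B.loopSet P))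
    (d : A) (Y : Finset LoopLabel) (σ : Fin (n + 2) → A) :
    ∏ C ∈ B.comps Y, B.Qpf w d C σ =
      ∑ σ' ∈ assignments (Fin.val ⁻¹' ⋃ C ∈ B.comps Y, B.interiorVset C) σ,
        ∏ P ∈ Y, w P σ' := by
  have hdisj : (B.comps Y : Set (Finset LoopLabel)).PairwiseDisjoint
      (fun C => (Fin.val ⁻¹' B.interiorVset C : Set (Fin (n + 2)))) :=
    fun _ hC _ hC' hne => (pairwiseDisjoint_interiorVset Y hC hC' hne).preimage _
  have hdep : ∀ C ∈ B.comps Y, DependsOn (fun σ => ∏ P ∈ C, w P σ)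
      ((Fin.val ⁻¹' B.interiorVset C : Set (Fin (n + 2))) ∪
        (⋃ C' ∈ B.comps Y, Fin.val ⁻¹' B.interiorVset C')ᶜ) :=
    fun C hC => (dependsOn_prod_weight hw C).mono (by
      simpa only [Set.preimage_union, Set.preimage_compl, Set.preimage_iUnion₂] using
        Set.preimage_mono (f := Fin.val) (Vset_subset_interiorVset_union_compl hC))
  simp only [Set.preimage_iUnion₂, prod_comps (B := B) Y,
    sum_assignments_biUnion_prod _ _ hdisj _ hdep]
  refine Finset.prod_congr rfl fun C _ => ?_
  rw [Qpf_eq_sum_assignments]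
  refine sum_assignments_congr (dependsOn_prod_weight hw C) fun v ⟨hvC, hvI⟩ => ?_
  have hvE : (v : ℕ) ∈ B.exposed C := by_contra fun h => hvI ⟨hvC, h⟩
  simp [extendExposed, hvE]

lemma Qpf_eq_sum_assignments_Wset [Fintype A] {w : LoopLabel → (Fin (n + 2) → A) → ℝ}
    (hw : ∀ P, DependsOn (w P) (Fin.val ⁻¹' B.loopSet P)) (d : A) {X : Finset LoopLabel}
    {L : LoopLabel} (hLX : L ∈ X) (hL : L ∈ B.labels) (τ : Fin (n + 2) → A) :
    B.Qpf w d X τ = ∑ σ ∈ assignments (Fin.val ⁻¹' B.Wset X L) (B.extendExposed d X τ),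
      w L σ * ∏ C ∈ B.comps (X.erase L), B.Qpf w d C σ := by
  rw [Qpf_eq_sum_assignments, interiorVset_eq_Wset_union hLX hL, Set.preimage_union,
    sum_assignments_union ((disjoint_Wset_iUnion_interiorVset hL).preimage _)]
  refine Finset.sum_congr rfl fun σ _ => ?_
  rw [prod_Qpf_comps hw, Finset.mul_sum]
  refine Finset.sum_congr rfl fun σ' hσ' => ?_
  have hσ'L : w L σ' = w L σ := hw L fun v hv =>
    mem_assignments.mp hσ' v (Set.disjoint_left.mp (disjoint_loopSet_iUnion_interiorVset hL) hv)
  rw [← Finset.mul_prod_erase X (w · σ') hLX, hσ'L]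

end Bistructure

open Bistructure in
theorem stmt15_general (n : ℕ) (A : Type) [Fintype A] (d : A)
    (B : Bistructure n) (w : LoopLabel → (Fin (n + 2) → A) → ℝ)
    (hwloc : ∀ (L : LoopLabel) (σ σ' : Fin (n + 2) → A),
        (∀ v : Fin (n + 2), (v : ℕ) ∈ B.loopSet L → σ v = σ' v) → w L σ = w L σ')
    (X : Finset LoopLabel) (hX : X ⊆ B.labels)
    (L : LoopLabel) (hL : L ∈ X) (τ : Fin (n + 2) → A) :
    B.Qpf w d X τ =
      ∑ σ' ∈ Finset.univ.filter (fun σ' : Fin (n + 2) → A =>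
          ∀ v : Fin (n + 2), (v : ℕ) ∉ B.Wset X L → σ' v = d),
        w L (Bistructure.combine (B.Wset X L) σ' τ) *
          ∏ C ∈ B.comps (X.erase L),
            B.Qpf w d C (Bistructure.combine (B.Wset X L) σ' τ) := by
  have hw : ∀ P, DependsOn (w P) (Fin.val ⁻¹' B.loopSet P) := fun P _ _ h => hwloc P _ _ h
  rw [Qpf_eq_sum_assignments_Wset hw d hL (hX hL) τ,
    sum_filter_combine_eq_sum_assignments _ _ (B.extendExposed d X τ) τ
      fun ρ => w L ρ * ∏ C ∈ B.comps (X.erase L), B.Qpf w d C ρ]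
  refine Finset.sum_congr rfl fun σ hσ => ?_
  congr 1
  · exact hw L fun v hv =>
      (combine_eq_of_mem_assignments hσ (loopSet_subset_Wset_union_exposed hv)).symm
  · exact Finset.prod_congr rfl fun C hC => Qpf_congr fun v hv =>
      (combine_eq_of_mem_assignments hσ (exposed_subset_Wset_union_exposed hC hv)).symm

/-- recursion for the dual partition function, eq. (1): for a finite
alphabet `A` with `|A| = 4`, positive loop weights `w` depending only on the letters on
the loop, an irreducible substructure `X` of `B`, a loop `L ∈ X` with irreducible
components `X₁,…,X_k` of `X ∖ {L}`, `W = (L ∪ ⋃ᵢ E^{Xᵢ}) ∖ E^X`, and any boundary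
assignment `τ` on `E^X`:
`Q(X,τ) = Σ_{σ' : W → A} w(L,σ_L) · Πᵢ Q(Xᵢ,τ_{Xᵢ})`, where `σ_L` and `τ_{Xᵢ}` are the
restrictions of the assignment combining `τ` on `E^X` with `σ'` on `W`. -/
theorem stmt15 (n : ℕ) (A : Type) [Fintype A] (hA : Fintype.card A = 4) (d : A)
    (B : Bistructure n) (w : LoopLabel → (Fin (n + 2) → A) → ℝ)
    (hwpos : ∀ L σ, 0 < w L σ)
    (hwloc : ∀ (L : LoopLabel) (σ σ' : Fin (n + 2) → A),
        (∀ v : Fin (n + 2), (v : ℕ) ∈ B.loopSet L → σ v = σ' v) → w L σ = w L σ')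
    (X : Finset LoopLabel) (hX : X ⊆ B.labels) (hXne : X.Nonempty)
    (hirr : ¬ B.Reducible X) (L : LoopLabel) (hL : L ∈ X) (τ : Fin (n + 2) → A) :
    B.Qpf w d X τ =
      ∑ σ' ∈ Finset.univ.filter (fun σ' : Fin (n + 2) → A =>
          ∀ v : Fin (n + 2), (v : ℕ) ∉ B.Wset X L → σ' v = d),
        w L (Bistructure.combine (B.Wset X L) σ' τ) *
          ∏ C ∈ B.comps (X.erase L),
            B.Qpf w d C (Bistructure.combine (B.Wset X L) σ' τ) :=
  stmt15_general n A d B w hwloc X hX L hL τ
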